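/- Let f : (0,∞) → ℝ be locally of bounded variation on (0,∞) and satisfy the general monotonicity inequality with constants C > 1 and λ = 2^ν (that is, for every x > 0 the total variation of f over [x, 2x] is at most C·∫_{x/λ}^{λx} |f(t)|/t dt), and let μ ∈ ℝ. Then the function g(t) = t^μ f(t) is locally of bounded variation on (0,∞) and there exist constants C' > 1 and λ' > 1 such that for every x > 0 the total variation of g over [x, 2x] is at most C'·∫_{x/λ'}^{λ'x} |g(t)|/t dt. -/

import Mathlib

/-!
On `[x, 2x]` the product rule for variations bounds the variation of `t ^ μ * f t` by
`sup t ^ μ · Var f + sup |f| · Var (t ^ μ)`, and both `t ^ μ` and its variation there are at most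
`2 ^ |μ| * x ^ μ`. Since `|f| ≤ |f x| + Var f` on `[x, 2x]` and `|f x|` is at most the
`dt / t`-average of `|f|` plus `Var f`, everything is bounded by `x ^ μ * ∫ |f t| / t` over
`(x / λ, λ x)`. On that interval `x ^ μ ≤ λ ^ |μ| * t ^ μ`, which turns this integral into the one
for `t ^ μ * f t`; so `λ' = λ` and `C' = 2 ^ |μ| * λ ^ |μ| * (3 C + 1 / log 2)` work.
-/

open MeasureTheory Filter Set

theorem eVariationOn_neg {α E : Type*} [LinearOrder α] [SeminormedAddCommGroup E] (f : α → E)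
    (s : Set α) : eVariationOn (fun x => -f x) s = eVariationOn f s := by
  simp only [eVariationOn, edist_neg_neg]

theorem AntitoneOn.eVariationOn_eq {α : Type*} [LinearOrder α] {f : α → ℝ} {s : Set α} {a b : α}
    (hf : AntitoneOn f s) (as : a ∈ s) (bs : b ∈ s) :
    eVariationOn f (s ∩ Icc a b) = ENNReal.ofReal (f a - f b) := by
  rw [← eVariationOn_neg, hf.neg.eVariationOn_eq as bs, neg_sub_neg]

theorem BoundedVariationOn.abs_le_abs_add {α : Type*} [LinearOrder α] {f : α → ℝ} {s : Set α}
    {a t : α} (hf : BoundedVariationOn f s) (ha : a ∈ s) (ht : t ∈ s) :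
    |f t| ≤ |f a| + (eVariationOn f s).toReal := by
  have := hf.dist_le ht ha
  rw [Real.dist_eq] at this
  linarith [abs_sub_abs_le_abs_sub (f t) (f a)]

theorem LocallyBoundedVariationOn.boundedVariationOn_Icc {α E : Type*} [LinearOrder α]
    [PseudoEMetricSpace E] {f : α → E} {s : Set α} {a b : α}
    (hf : LocallyBoundedVariationOn f s) (hab : a ≤ b) (hs : Icc a b ⊆ s) :
    BoundedVariationOn f (Icc a b) := by
  simpa only [inter_eq_right.2 hs] using hf a b (hs (left_mem_Icc.2 hab)) (hs (right_mem_Icc.2 hab))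

theorem LocallyBoundedVariationOn.integrableOn_isCompact {f : ℝ → ℝ} {s : Set ℝ} {μ : Measure ℝ}
    [IsFiniteMeasureOnCompacts μ] (hf : LocallyBoundedVariationOn f s) (hs : IsCompact s) :
    IntegrableOn f s μ := by
  obtain ⟨p, q, hp, hq, rfl⟩ := hf.exists_monotoneOn_sub_monotoneOn
  exact (hp.integrableOn_isCompact hs).sub (hq.integrableOn_isCompact hs)

theorem BoundedVariationOn.integrableOn_abs_div {f : ℝ → ℝ} {a b : ℝ} (ha : 0 < a)
    (hf : BoundedVariationOn f (Icc a b)) : IntegrableOn (fun t => |f t| / t) (Icc a b) := by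
  have hinv : ContinuousOn (fun t : ℝ => t⁻¹) (Icc a b) :=
    continuousOn_inv₀.mono fun t ht => (ha.trans_le ht.1).ne'
  simpa only [div_eq_mul_inv] using IntegrableOn.mul_continuousOn
    (hf.locallyBoundedVariationOn.integrableOn_isCompact isCompact_Icc).abs hinv isCompact_Icc

namespace Real

theorem rpow_le_rpow_abs_mul_rpow {L x t μ : ℝ} (hx : 0 < x) (ht : 0 < t) (hxt : x ≤ L * t)
    (htx : t ≤ L * x) : t ^ μ ≤ L ^ |μ| * x ^ μ := by
  rw [← div_le_iff₀ (rpow_pos_of_pos hx μ), ← div_rpow ht.le hx.le]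
  rcases le_total 0 μ with hμ | hμ
  · rw [abs_of_nonneg hμ]
    exact rpow_le_rpow (div_nonneg ht.le hx.le) ((div_le_iff₀ hx).2 htx) hμ
  · rw [abs_of_nonpos hμ, ← inv_div, inv_rpow (div_nonneg hx.le ht.le), ← rpow_neg
      (div_nonneg hx.le ht.le)]
    exact rpow_le_rpow (div_nonneg hx.le ht.le) ((div_le_iff₀ ht).2 hxt) (neg_nonneg.2 hμ)

theorem eVariationOn_rpow_Icc {a b μ : ℝ} (ha : 0 < a) (hab : a ≤ b) :
    eVariationOn (fun t : ℝ => t ^ μ) (Icc a b) = ENNReal.ofReal |b ^ μ - a ^ μ| := by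
  have hIcc : Icc a b = Icc a b ∩ Icc a b := (inter_self _).symm
  have as : a ∈ Icc a b := left_mem_Icc.2 hab
  have bs : b ∈ Icc a b := right_mem_Icc.2 hab
  rcases le_total 0 μ with hμ | hμ
  · have hmono : MonotoneOn (fun t : ℝ => t ^ μ) (Icc a b) := fun s hs t _ hst =>
      rpow_le_rpow (ha.trans_le hs.1).le hst hμ
    rw [hIcc, hmono.eVariationOn_eq as bs, abs_of_nonneg (sub_nonneg.2 (hmono as bs hab))]
  · have hanti : AntitoneOn (fun t : ℝ => t ^ μ) (Icc a b) := fun s hs _ _ hst =>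
      rpow_le_rpow_of_nonpos (ha.trans_le hs.1) hst hμ
    rw [hIcc, hanti.eVariationOn_eq as bs, abs_sub_comm,
      abs_of_nonneg (sub_nonneg.2 (hanti as bs hab))]

theorem locallyBoundedVariationOn_rpow (μ : ℝ) :
    LocallyBoundedVariationOn (fun t : ℝ => t ^ μ) (Ioi 0) := by
  intro a b ha hb
  rcases le_or_gt a b with hab | hab
  · rw [inter_eq_right.2 ((Icc_subset_Ioi_iff hab).2 ha), BoundedVariationOn,
      eVariationOn_rpow_Icc ha hab]
    exact ENNReal.ofReal_ne_top
  · rw [Icc_eq_empty hab.not_ge, inter_empty]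
    exact (eVariationOn.subsingleton _ subsingleton_empty).trans_ne ENNReal.zero_ne_top

end Real

theorem BoundedVariationOn.abs_le_setIntegral_div_log_add {f : ℝ → ℝ} {a b c : ℝ} (ha : 0 < a)
    (hab : a < b) (hf : BoundedVariationOn f (Icc a b)) (hc : c ∈ Icc a b) :
    |f c| ≤ (∫ t in Ioo a b, |f t| / t) / Real.log (b / a) + (eVariationOn f (Icc a b)).toReal := by
  set V := (eVariationOn f (Icc a b)).toReal
  have hlog : 0 < Real.log (b / a) := Real.log_pos ((one_lt_div ha).2 hab)
  have hinv_int : IntegrableOn (fun t : ℝ => t⁻¹) (Ioo a b) :=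
    ((continuousOn_inv₀.mono fun t ht => (ha.trans_le ht.1).ne').integrableOn_Icc).mono_set
      Ioo_subset_Icc_self
  have hinv : ∫ t in Ioo a b, t⁻¹ = Real.log (b / a) := by
    rw [← integral_Ioc_eq_integral_Ioo, ← intervalIntegral.integral_of_le hab.le,
      integral_inv_of_pos ha (ha.trans hab)]
  have key : (|f c| - V) * Real.log (b / a) ≤ ∫ t in Ioo a b, |f t| / t :=
    calc (|f c| - V) * Real.log (b / a) = ∫ t in Ioo a b, (|f c| - V) * t⁻¹ := by
          rw [integral_const_mul, hinv]
      _ ≤ ∫ t in Ioo a b, |f t| / t := by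
          refine setIntegral_mono_on (hinv_int.const_mul _)
            ((hf.integrableOn_abs_div ha).mono_set Ioo_subset_Icc_self) measurableSet_Ioo
            fun t ht => ?_
          rw [div_eq_mul_inv]
          have := hf.abs_le_abs_add (Ioo_subset_Icc_self ht) hc
          exact mul_le_mul_of_nonneg_right (by linarith) (inv_nonneg.2 (ha.trans ht.1).le)
  linarith [(le_div_iff₀ hlog).2 key]

theorem rpow_mul_setIntegral_abs_div_le {f : ℝ → ℝ} {L x : ℝ} (μ : ℝ) (hx : 0 < x) (hL : 0 < L)
    (hf : IntegrableOn (fun t => |f t| / t) (Ioo (x / L) (L * x)))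
    (hg : IntegrableOn (fun t => |t ^ μ * f t| / t) (Ioo (x / L) (L * x))) :
    x ^ μ * ∫ t in Ioo (x / L) (L * x), |f t| / t ≤
      L ^ |μ| * ∫ t in Ioo (x / L) (L * x), |t ^ μ * f t| / t := by
  rw [← integral_const_mul, ← integral_const_mul]
  refine setIntegral_mono_on (hf.const_mul _) (hg.const_mul _) measurableSet_Ioo fun t ht => ?_
  have ht0 : 0 < t := (div_pos hx hL).trans ht.1
  have hxt : x ≤ L * t := ((div_lt_iff₀' hL).1 ht.1).le
  calc x ^ μ * (|f t| / t) ≤ L ^ |μ| * t ^ μ * (|f t| / t) :=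
        mul_le_mul_of_nonneg_right (Real.rpow_le_rpow_abs_mul_rpow ht0 hx ht.2.le hxt)
          (by positivity)
    _ = L ^ |μ| * (|t ^ μ * f t| / t) := by
        rw [abs_mul, abs_of_pos (Real.rpow_pos_of_pos ht0 μ)]; ring

theorem eVariationOn_rpow_mul_Icc_two_mul_le {f : ℝ → ℝ} {x : ℝ} (μ : ℝ) (hx : 0 < x)
    (hf : BoundedVariationOn f (Icc x (2 * x))) :
    eVariationOn (fun t => t ^ μ * f t) (Icc x (2 * x)) ≤
      ENNReal.ofReal (2 ^ |μ| * x ^ μ * (3 * (eVariationOn f (Icc x (2 * x))).toReal +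
        (∫ t in Ioo x (2 * x), |f t| / t) / Real.log 2)) := by
  set V := (eVariationOn f (Icc x (2 * x))).toReal
  set M := (2 : ℝ) ^ |μ| * x ^ μ
  have hx2 : x ≤ 2 * x := by linarith
  have hM : ∀ t ∈ Icc x (2 * x), 0 < t ^ μ ∧ t ^ μ ≤ M := fun t ht =>
    ⟨Real.rpow_pos_of_pos (hx.trans_le ht.1) μ,
      Real.rpow_le_rpow_abs_mul_rpow hx (hx.trans_le ht.1) (by linarith [ht.1]) ht.2⟩
  have hP : ∀ t ∈ Icc x (2 * x), ‖t ^ μ‖ₑ ≤ ENNReal.ofReal M := fun t ht => by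
    rw [Real.enorm_eq_ofReal_abs, abs_of_pos (hM t ht).1]
    exact ENNReal.ofReal_le_ofReal (hM t ht).2
  have hF : ∀ t ∈ Icc x (2 * x), ‖f t‖ₑ ≤ ENNReal.ofReal (|f x| + V) := fun t ht => by
    rw [Real.enorm_eq_ofReal_abs]
    exact ENNReal.ofReal_le_ofReal (hf.abs_le_abs_add (left_mem_Icc.2 hx2) ht)
  have hVarP : eVariationOn (fun t : ℝ => t ^ μ) (Icc x (2 * x)) ≤ ENNReal.ofReal M := by
    rw [Real.eVariationOn_rpow_Icc hx hx2]
    have h1 := hM x (left_mem_Icc.2 hx2)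
    have h2 := hM (2 * x) (right_mem_Icc.2 hx2)
    exact ENNReal.ofReal_le_ofReal (abs_sub_le_of_nonneg_of_le h2.1.le h2.2 h1.1.le h1.2)
  have hfx : |f x| ≤ (∫ t in Ioo x (2 * x), |f t| / t) / Real.log 2 + V := by
    simpa only [mul_div_cancel_right₀ 2 hx.ne'] using
      hf.abs_le_setIntegral_div_log_add hx (by linarith) (left_mem_Icc.2 hx2)
  have hM0 : 0 ≤ M := (hM x (left_mem_Icc.2 hx2)).1.le.trans (hM x (left_mem_Icc.2 hx2)).2
  have hV0 : 0 ≤ V := ENNReal.toReal_nonneg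
  calc eVariationOn (fun t => t ^ μ * f t) (Icc x (2 * x))
      ≤ ENNReal.ofReal M * eVariationOn f (Icc x (2 * x)) +
          ENNReal.ofReal (|f x| + V) * eVariationOn (fun t : ℝ => t ^ μ) (Icc x (2 * x)) :=
        eVariationOn_fun_mul_le hP hF
    _ ≤ ENNReal.ofReal M * ENNReal.ofReal V + ENNReal.ofReal (|f x| + V) * ENNReal.ofReal M := by
        rw [ENNReal.ofReal_toReal hf]; gcongr
    _ = ENNReal.ofReal (M * (2 * V + |f x|)) := by
        rw [← ENNReal.ofReal_mul hM0, ← ENNReal.ofReal_mul (by positivity),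
          ← ENNReal.ofReal_add (by positivity) (by positivity)]
        ring_nf
    _ ≤ _ := ENNReal.ofReal_le_ofReal (mul_le_mul_of_nonneg_left (by linarith) hM0)

theorem eVariationOn_rpow_mul_le_of_GM {f : ℝ → ℝ} {C L x : ℝ} (μ : ℝ) (hC : 0 ≤ C) (hL : 2 ≤ L)
    (hx : 0 < x) (hf : LocallyBoundedVariationOn f (Ioi 0))
    (hGM : eVariationOn f (Icc x (2 * x)) ≤
      ENNReal.ofReal (C * ∫ t in Ioo (x / L) (L * x), |f t| / t)) :
    eVariationOn (fun t => t ^ μ * f t) (Icc x (2 * x)) ≤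
      ENNReal.ofReal (2 ^ |μ| * L ^ |μ| * (3 * C + 1 / Real.log 2) *
        ∫ t in Ioo (x / L) (L * x), |t ^ μ * f t| / t) := by
  have hL0 : 0 < L := by linarith
  have hxL : 0 < x / L := div_pos hx hL0
  have hxLx : x / L ≤ x := div_le_self hx.le (by linarith)
  have hxLx2 : 2 * x ≤ L * x := by nlinarith
  have hpos : Icc (x / L) (L * x) ⊆ Ioi 0 := (Icc_subset_Ioi_iff (by linarith)).2 hxL
  have hIf := ((hf.boundedVariationOn_Icc (by linarith) hpos).integrableOn_abs_div hxL).mono_set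
    Ioo_subset_Icc_self
  have hIg := ((((Real.locallyBoundedVariationOn_rpow μ).fun_mul hf).boundedVariationOn_Icc
    (by linarith) hpos).integrableOn_abs_div hxL).mono_set Ioo_subset_Icc_self
  set I := ∫ t in Ioo (x / L) (L * x), |f t| / t
  have hI0 : 0 ≤ I := setIntegral_nonneg measurableSet_Ioo fun t ht =>
    div_nonneg (abs_nonneg _) (hxL.trans ht.1).le
  have hV : (eVariationOn f (Icc x (2 * x))).toReal ≤ C * I :=
    ENNReal.toReal_le_of_le_ofReal (mul_nonneg hC hI0) hGM
  have hI2 : ∫ t in Ioo x (2 * x), |f t| / t ≤ I :=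
    setIntegral_mono_set hIf (ae_restrict_of_forall_mem measurableSet_Ioo fun t ht =>
      div_nonneg (abs_nonneg _) (hxL.trans ht.1).le) (Ioo_subset_Ioo hxLx hxLx2).eventuallyLE
  have hIJ := rpow_mul_setIntegral_abs_div_le μ hx hL0 hIf hIg
  refine (eVariationOn_rpow_mul_Icc_two_mul_le μ hx
    ((hf.boundedVariationOn_Icc (by linarith) hpos).mono (Icc_subset_Icc hxLx hxLx2))).trans
    (ENNReal.ofReal_le_ofReal ?_)
  calc 2 ^ |μ| * x ^ μ * (3 * (eVariationOn f (Icc x (2 * x))).toReal +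
        (∫ t in Ioo x (2 * x), |f t| / t) / Real.log 2)
      ≤ 2 ^ |μ| * x ^ μ * (3 * (C * I) + I / Real.log 2) := by gcongr
    _ = 2 ^ |μ| * (3 * C + 1 / Real.log 2) * (x ^ μ * I) := by ring
    _ ≤ 2 ^ |μ| * (3 * C + 1 / Real.log 2) * (L ^ |μ| * _) := by gcongr
    _ = _ := by ring

/-- If `f` is locally of bounded variation on `(0,∞)` and satisfies the general monotonicity
inequality with constants `C > 1` and `λ = 2^ν`, then for any `μ ∈ ℝ` the function
`g(t) = t^μ f(t)` is locally of bounded variation on `(0,∞)` and satisfies the general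
monotonicity inequality with some constants `C' > 1` and `λ' > 1`. -/
theorem GM_inequality_of_rpow_smul (f : ℝ → ℝ) (C : ℝ) (hC : 1 < C) (ν : ℕ) (hν : 1 ≤ ν)
    (hBV : LocallyBoundedVariationOn f (Set.Ioi 0))
    (hGMineq : ∀ x > (0:ℝ), eVariationOn f (Set.Icc x (2*x)) ≤
      ENNReal.ofReal (C * ∫ t in Set.Ioo (x/(2^ν)) ((2^ν)*x), |f t| / t))
    (μ : ℝ) :
    LocallyBoundedVariationOn (fun t : ℝ => t ^ μ * f t) (Set.Ioi 0) ∧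
    ∃ C' : ℝ, 1 < C' ∧ ∃ l' : ℝ, 1 < l' ∧
      ∀ x > (0:ℝ), eVariationOn (fun t : ℝ => t ^ μ * f t) (Set.Icc x (2*x)) ≤
        ENNReal.ofReal (C' * ∫ t in Set.Ioo (x/l') (l'*x), |t ^ μ * f t| / t) := by
  have hL : (2 : ℝ) ≤ 2 ^ ν := le_self_pow₀ one_le_two (by omega)
  refine ⟨(Real.locallyBoundedVariationOn_rpow μ).fun_mul hBV,
    2 ^ |μ| * (2 ^ ν) ^ |μ| * (3 * C + 1 / Real.log 2), ?_, 2 ^ ν, by linarith,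
    fun x hx => eVariationOn_rpow_mul_le_of_GM μ (by linarith) hL hx hBV (hGMineq x hx)⟩
  have hlog : 0 < 1 / Real.log 2 := one_div_pos.2 (Real.log_pos one_lt_two)
  refine one_lt_mul_of_le_of_lt (one_le_mul_of_one_le_of_one_le ?_ ?_) (by linarith)
  · exact Real.one_le_rpow one_le_two (abs_nonneg μ)
  · exact Real.one_le_rpow (by linarith) (abs_nonneg μ)
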